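/- arXiv:1206.2607 — 3 statements merged into one kernel-verified Lean document; each statement's English description precedes it below -/
import Mathlib

section
/- Let 𝔤 be a Lie algebra with weak nondegenerate pairing ⟨·,·⟩ against 𝔤*; let h be a Hamiltonian, C a Casimir (ad*_{δC/δμ} μ = 0 for all μ), γ a positive symmetric bilinear form on 𝔤 with flat map ♭. Then along solutions of ∂_t μ + ad*_{δh/δμ} μ = θ ad*_{δh/δμ} [δC/δμ, δh/δμ]♭, the energy h(μ) is constant. -/
/-- coadjoint operator: `⟨ad*_ξ μ, η⟩ = ⟨μ, [ξ, η]⟩` -/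
noncomputable def coad {G : Type*} [LieRing G] [LieAlgebra ℝ G]
    (ξ : G) (μ : Module.Dual ℝ G) : Module.Dual ℝ G :=
  μ.comp (LieAlgebra.ad ℝ G ξ)

/-- Along the Casimir-dissipative Lie–Poisson equation
`∂_t μ + ad*_{δh/δμ} μ = θ ad*_{δh/δμ} [δC/δμ, δh/δμ]♭`, the energy `h(μ)` is
constant.  Here `δh` and `δC` are the functional derivatives of `h` and of the
Casimir `C` (`hCas` being the Casimir property), `γ` a positive symmetric
bilinear form whose flat map is `ξ♭ = γ ξ`, and `hchainh` is the chain rule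
for `h` along the solution. -/
theorem lie_poisson_casimir_dissipation_energy_conserved
    {G : Type*} [LieRing G] [LieAlgebra ℝ G] [FiniteDimensional ℝ G]
    (h C : Module.Dual ℝ G → ℝ) (δh δC : Module.Dual ℝ G → G)
    (γ : G →ₗ[ℝ] G →ₗ[ℝ] ℝ) (θ : ℝ) (hθ : 0 < θ)
    (hγsymm : ∀ a b : G, γ a b = γ b a)
    (hγpos : ∀ a : G, 0 ≤ γ a a)
    (hCas : ∀ ν : Module.Dual ℝ G, coad (δC ν) ν = 0)
    (μ μ' : ℝ → Module.Dual ℝ G)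
    (hd : ∀ t (η : G), HasDerivAt (fun s => μ s η) (μ' t η) t)
    (heq : ∀ t, μ' t = - coad (δh (μ t)) (μ t)
      + θ • coad (δh (μ t)) (γ ⁅δC (μ t), δh (μ t)⁆))
    (hchainh : ∀ t, HasDerivAt (fun s => h (μ s)) (μ' t (δh (μ t))) t) :
    ∀ t, h (μ t) = h (μ 0) := by
  have hzero : ∀ t, HasDerivAt (fun s => h (μ s)) 0 t := by
    intro t
    have := hchainh t
    rwa [heq t, show (- coad (δh (μ t)) (μ t)
      + θ • coad (δh (μ t)) (γ ⁅δC (μ t), δh (μ t)⁆)) (δh (μ t)) = 0 by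
        simp [coad]] at this
  intro t
  have : ∀ x : ℝ, deriv (fun s => h (μ s)) x = 0 := fun x => (hzero x).deriv
  exact is_const_of_deriv_eq_zero
    (fun x => (hzero x).differentiableAt) this t 0
end

section
/- Under the Casimir-dissipative Lie–Poisson equation ∂_t μ + ad*_{δh/δμ} μ = θ ad*_{δh/δμ} [δC/δμ, δh/δμ]♭ on a finite-dimensional Lie algebra, the Casimir C satisfies dC(μ)/dt = −θ γ([δC/δμ, δh/δμ], [δC/δμ, δh/δμ]) ≤ 0. -/
/-- Under the Casimir-dissipative Lie–Poisson equation
`∂_t μ + ad*_{δh/δμ} μ = θ ad*_{δh/δμ} [δC/δμ, δh/δμ]♭` on a finite-dimensional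
Lie algebra, the Casimir `C` satisfies
`dC(μ)/dt = −θ γ([δC/δμ, δh/δμ], [δC/δμ, δh/δμ]) ≤ 0`. -/
theorem lie_poisson_casimir_dissipation_rate
    {G : Type*} [LieRing G] [LieAlgebra ℝ G] [FiniteDimensional ℝ G]
    (h C : Module.Dual ℝ G → ℝ) (δh δC : Module.Dual ℝ G → G)
    (γ : G →ₗ[ℝ] G →ₗ[ℝ] ℝ) (θ : ℝ) (hθ : 0 < θ)
    (hγsymm : ∀ a b : G, γ a b = γ b a)
    (hγpos : ∀ a : G, 0 ≤ γ a a)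
    (hCas : ∀ ν : Module.Dual ℝ G, coad (δC ν) ν = 0)
    (μ μ' : ℝ → Module.Dual ℝ G)
    (hd : ∀ t (η : G), HasDerivAt (fun s => μ s η) (μ' t η) t)
    (heq : ∀ t, μ' t = - coad (δh (μ t)) (μ t)
      + θ • coad (δh (μ t)) (γ ⁅δC (μ t), δh (μ t)⁆))
    (hchainC : ∀ t, HasDerivAt (fun s => C (μ s)) (μ' t (δC (μ t))) t) :
    ∀ t, HasDerivAt (fun s => C (μ s))
        (-θ * γ ⁅δC (μ t), δh (μ t)⁆ ⁅δC (μ t), δh (μ t)⁆) t ∧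
      -θ * γ ⁅δC (μ t), δh (μ t)⁆ ⁅δC (μ t), δh (μ t)⁆ ≤ 0 := by
  intro t
  have key : μ' t (δC (μ t)) =
      -θ * γ ⁅δC (μ t), δh (μ t)⁆ ⁅δC (μ t), δh (μ t)⁆ := by
    have h1 : μ t ⁅δh (μ t), δC (μ t)⁆ = 0 := by
      have := congrArg (fun f => f (δh (μ t))) (hCas (μ t))
      simp only [coad, LinearMap.comp_apply, LieAlgebra.ad_apply,
        LinearMap.zero_apply] at this
      rw [← lie_skew, map_neg, this, neg_zero]
    rw [heq t]
    simp only [LinearMap.add_apply, LinearMap.neg_apply, LinearMap.smul_apply,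
      coad, LinearMap.comp_apply, LieAlgebra.ad_apply, smul_eq_mul]
    rw [h1, ← lie_skew (δC (μ t)) (δh (μ t)), map_neg]
    simp only [LinearMap.neg_apply, map_neg]
    ring
  refine ⟨key ▸ hchainC t, ?_⟩
  have := hγpos ⁅δC (μ t), δh (μ t)⁆
  nlinarith
end

section
/- On a finite-dimensional Lie algebra, the double-bracket equation ∂_t μ + ad*_{δh/δμ} μ = θ ad*_{(ad*_{δh/δμ} μ)♯} μ preserves every Casimir C (i.e., dC(μ)/dt = 0) and dissipates energy: dh(μ)/dt = −θ γ*(ad*_{δh/δμ} μ, ad*_{δh/δμ} μ) ≤ 0. -/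
/-- On a finite-dimensional Lie algebra, the double-bracket equation
`∂_t μ + ad*_{δh/δμ} μ = θ ad*_{(ad*_{δh/δμ} μ)♯} μ` preserves every Casimir
(`dC/dt = 0`) and dissipates energy:
`dh/dt = −θ γ*(ad*_{δh/δμ} μ, ad*_{δh/δμ} μ) ≤ 0`.  Here `γ` is an inner
product on `𝔤` with sharp map `♯` characterized by `γ(ν♯, η) = ν(η)`, and the
induced inner product on `𝔤*` is `γ*(ν₁,ν₂) = γ(ν₁♯, ν₂♯)`. -/
theorem double_bracket_preserves_casimir_dissipates_energy
    {G : Type*} [LieRing G] [LieAlgebra ℝ G] [FiniteDimensional ℝ G]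
    (h C : Module.Dual ℝ G → ℝ) (δh δC : Module.Dual ℝ G → G)
    (γ : G →ₗ[ℝ] G →ₗ[ℝ] ℝ) (sharp : Module.Dual ℝ G → G) (θ : ℝ) (hθ : 0 < θ)
    (hγsymm : ∀ a b : G, γ a b = γ b a)
    (hγpos : ∀ a : G, 0 ≤ γ a a)
    (hsharp : ∀ (ν : Module.Dual ℝ G) (η : G), γ (sharp ν) η = ν η)
    (hCas : ∀ ν : Module.Dual ℝ G, coad (δC ν) ν = 0)
    (μ μ' : ℝ → Module.Dual ℝ G)
    (hd : ∀ t (η : G), HasDerivAt (fun s => μ s η) (μ' t η) t)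
    (heq : ∀ t, μ' t = - coad (δh (μ t)) (μ t)
      + θ • coad (sharp (coad (δh (μ t)) (μ t))) (μ t))
    (hchainC : ∀ t, HasDerivAt (fun s => C (μ s)) (μ' t (δC (μ t))) t)
    (hchainh : ∀ t, HasDerivAt (fun s => h (μ s)) (μ' t (δh (μ t))) t) :
    ∀ t, HasDerivAt (fun s => C (μ s)) 0 t ∧
      HasDerivAt (fun s => h (μ s))
        (-θ * γ (sharp (coad (δh (μ t)) (μ t))) (sharp (coad (δh (μ t)) (μ t)))) t ∧
      -θ * γ (sharp (coad (δh (μ t)) (μ t))) (sharp (coad (δh (μ t)) (μ t))) ≤ 0 := by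
  intro t
  set ν := coad (δh (μ t)) (μ t) with hν
  have hcoad : ∀ (ξ : G) (m : Module.Dual ℝ G) (η : G), coad ξ m η = m ⁅ξ, η⁆ := by
    intro ξ m η; rfl
  have hcas0 : ∀ η : G, μ t ⁅δC (μ t), η⁆ = 0 := by
    intro η
    have := congrArg (fun f : Module.Dual ℝ G => f η) (hCas (μ t))
    simpa [hcoad] using this
  have hC0 : μ' t (δC (μ t)) = 0 := by
    rw [heq t]
    simp only [LinearMap.add_apply, LinearMap.neg_apply, LinearMap.smul_apply, hcoad,
      smul_eq_mul]
    have h1 : μ t ⁅δh (μ t), δC (μ t)⁆ = 0 := by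
      rw [← lie_skew, map_neg, hcas0]; ring
    have h2 : μ t ⁅sharp ν, δC (μ t)⁆ = 0 := by
      rw [← lie_skew, map_neg, hcas0]; ring
    rw [h1, h2]; ring
  have hνsharp : ν (sharp ν) = γ (sharp ν) (sharp ν) := (hsharp ν (sharp ν)).symm
  have hh : μ' t (δh (μ t)) = -θ * γ (sharp ν) (sharp ν) := by
    rw [heq t]
    simp only [LinearMap.add_apply, LinearMap.neg_apply, LinearMap.smul_apply, hcoad,
      smul_eq_mul]
    have h1 : μ t ⁅δh (μ t), δh (μ t)⁆ = 0 := by simp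
    have h2 : μ t ⁅sharp ν, δh (μ t)⁆ = -γ (sharp ν) (sharp ν) := by
      rw [← lie_skew, map_neg]
      have : μ t ⁅δh (μ t), sharp ν⁆ = ν (sharp ν) := by rw [hν, hcoad]
      rw [this, hνsharp]
    rw [h1, h2]; ring
  refine ⟨hC0 ▸ hchainC t, hh ▸ hchainh t, ?_⟩
  have := hγpos (sharp ν)
  nlinarith
end
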